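/- arXiv:1802.02819 — 8 statements merged into one kernel-verified Lean document; each statement's English description precedes it below -/
import Mathlib

section
/- The bijective or-pointer number and degeneracy are equivalent graph parameters: a class of undirected graphs has bounded bijective or-pointer number if and only if it has bounded degeneracy. More precisely, every graph with bijective or-pointer number at most k has degeneracy at most 2k, and every graph with degeneracy at most k has bijective or-pointer number at most k. -/
/-- The bijective or-pointer number of `G` is at most `k`: there are a bijective
id-labeling `ι : V → [n]` and `ℓ : V → [n]^k` such that distinct `u, v` are
adjacent iff `ι u` occurs in `ℓ v` or `ι v` occurs in `ℓ u`. -/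
def BijOrPtrLe {n : ℕ} (G : SimpleGraph (Fin n)) (k : ℕ) : Prop :=
  ∃ (ι : Fin n ≃ Fin n) (ℓ : Fin n → Fin k → Fin n),
    ∀ u v : Fin n, u ≠ v →
      (G.Adj u v ↔ (∃ i, ℓ v i = ι u) ∨ (∃ i, ℓ u i = ι v))

/-- The degeneracy of `G` is at most `k`: every nonempty induced subgraph
contains a vertex of degree at most `k`. -/
def DegenLe {n : ℕ} (G : SimpleGraph (Fin n)) (k : ℕ) : Prop :=
  ∀ s : Set (Fin n), s.Nonempty → ∃ v ∈ s, (G.neighborSet v ∩ s).ncard ≤ k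

abbrev GClass := ∀ n : ℕ, Set (SimpleGraph (Fin n))

theorem aux_dir1 (n k : ℕ) (G : SimpleGraph (Fin n)) (h : BijOrPtrLe G k) :
    DegenLe G (2 * k) := by
  classical
  obtain ⟨ι, ℓ, hcond⟩ := h
  intro s hs
  set t : Finset (Fin n) := (Set.toFinite s).toFinset with ht
  have hts : ∀ x, x ∈ t ↔ x ∈ s := fun x => (Set.toFinite s).mem_toFinset
  by_contra hcon
  push_neg at hcon
  -- adjacency set within t
  set A : Fin n → Finset (Fin n) := fun v => t.filter (fun u => G.Adj v u) with hA
  have hAcard : ∀ v ∈ s, (G.neighborSet v ∩ s).ncard = (A v).card := by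
    intro v _
    have : G.neighborSet v ∩ s = ↑(A v) := by
      ext u
      simp [hA, hts, SimpleGraph.mem_neighborSet, and_comm]
    rw [this, Set.ncard_coe_finset]
  -- bound on pointer-image filters
  have himg : ∀ (w : Fin n), (t.filter (fun u => ∃ i, ℓ w i = ι u)).card ≤ k := by
    intro w
    have hsub : t.filter (fun u => ∃ i, ℓ w i = ι u) ⊆
        Finset.univ.image (fun i : Fin k => ι.symm (ℓ w i)) := by
      intro u hu
      rw [Finset.mem_filter] at hu
      obtain ⟨i, hi⟩ := hu.2
      simp only [Finset.mem_image]
      exact ⟨i, Finset.mem_univ i, by rw [hi, Equiv.symm_apply_apply]⟩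
    calc (t.filter (fun u => ∃ i, ℓ w i = ι u)).card
        ≤ (Finset.univ.image (fun i : Fin k => ι.symm (ℓ w i))).card :=
          Finset.card_le_card hsub
      _ ≤ (Finset.univ : Finset (Fin k)).card := Finset.card_image_le
      _ = k := by simp
  -- subset decomposition
  have hsubA : ∀ v ∈ t, A v ⊆ t.filter (fun u => ∃ i, ℓ v i = ι u) ∪
      t.filter (fun u => ∃ i, ℓ u i = ι v) := by
    intro v _ u hu
    rw [Finset.mem_filter] at hu
    have hne : v ≠ u := hu.2.ne
    have := (hcond v u hne).mp hu.2
    rcases this with h1 | h2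
    · exact Finset.mem_union_right _ (Finset.mem_filter.mpr ⟨hu.1, h1⟩)
    · exact Finset.mem_union_left _ (Finset.mem_filter.mpr ⟨hu.1, h2⟩)
  have hsum : ∑ v ∈ t, (A v).card ≤ 2 * k * t.card := by
    have h1 : ∑ v ∈ t, (A v).card ≤
        ∑ v ∈ t, ((t.filter (fun u => ∃ i, ℓ v i = ι u)).card +
          (t.filter (fun u => ∃ i, ℓ u i = ι v)).card) := by
      apply Finset.sum_le_sum
      intro v hv
      calc (A v).card ≤ (t.filter (fun u => ∃ i, ℓ v i = ι u) ∪
          t.filter (fun u => ∃ i, ℓ u i = ι v)).card :=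
            Finset.card_le_card (hsubA v hv)
        _ ≤ _ := Finset.card_union_le _ _
    have h2 : ∑ v ∈ t, (t.filter (fun u => ∃ i, ℓ v i = ι u)).card ≤ k * t.card := by
      calc ∑ v ∈ t, (t.filter (fun u => ∃ i, ℓ v i = ι u)).card
          ≤ ∑ _v ∈ t, k := Finset.sum_le_sum (fun v _ => himg v)
        _ = k * t.card := by rw [Finset.sum_const, smul_eq_mul, mul_comm]
    have h3 : ∑ v ∈ t, (t.filter (fun u => ∃ i, ℓ u i = ι v)).card ≤ k * t.card := by
      have hswap : ∑ v ∈ t, (t.filter (fun u => ∃ i, ℓ u i = ι v)).card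
          = ∑ u ∈ t, (t.filter (fun v => ∃ i, ℓ u i = ι v)).card := by
        simp only [Finset.card_filter]
        exact Finset.sum_comm
      rw [hswap]
      calc ∑ u ∈ t, (t.filter (fun v => ∃ i, ℓ u i = ι v)).card
          ≤ ∑ _u ∈ t, k := Finset.sum_le_sum (fun u _ => himg u)
        _ = k * t.card := by rw [Finset.sum_const, smul_eq_mul, mul_comm]
    calc ∑ v ∈ t, (A v).card ≤ _ := h1
      _ = ∑ v ∈ t, (t.filter (fun u => ∃ i, ℓ v i = ι u)).card +
          ∑ v ∈ t, (t.filter (fun u => ∃ i, ℓ u i = ι v)).card := Finset.sum_add_distrib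
      _ ≤ k * t.card + k * t.card := Nat.add_le_add h2 h3
      _ = 2 * k * t.card := by ring
  have hlow : (2 * k + 1) * t.card ≤ ∑ v ∈ t, (A v).card := by
    have : ∑ _v ∈ t, (2 * k + 1) ≤ ∑ v ∈ t, (A v).card := by
      apply Finset.sum_le_sum
      intro v hv
      have hvs : v ∈ s := (hts v).mp hv
      have := hcon v hvs
      rw [hAcard v hvs] at this
      omega
    calc (2 * k + 1) * t.card = ∑ _v ∈ t, (2 * k + 1) := by
          rw [Finset.sum_const, smul_eq_mul, mul_comm]
      _ ≤ _ := this
  have htcard : 0 < t.card := by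
    obtain ⟨x, hx⟩ := hs
    exact Finset.card_pos.mpr ⟨x, (hts x).mpr hx⟩
  have hlt : 2 * k * t.card < (2 * k + 1) * t.card :=
    (Nat.mul_lt_mul_right htcard).mpr (by omega)
  exact absurd (le_trans hlow hsum) (not_le.mpr hlt)

open Classical in
theorem exists_elim_list {n k : ℕ} (G : SimpleGraph (Fin n)) (h : DegenLe G k) :
    ∀ (m : ℕ) (s : Finset (Fin n)), s.card = m →
      ∃ l : List (Fin n), l.Nodup ∧ l.toFinset = s ∧
        ∀ i (hi : i < l.length),
          ((Finset.univ.filter (fun u => G.Adj (l.get ⟨i, hi⟩) u)) ∩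
            (l.take i).toFinset).card ≤ k := by
  intro m
  induction m using Nat.strong_induction_on with
  | _ m ih =>
    intro s hcard
    rcases Finset.eq_empty_or_nonempty s with rfl | hne
    · exact ⟨[], List.nodup_nil, by simp, by simp⟩
    · obtain ⟨v, hvs, hdeg⟩ := h ↑s (by exact_mod_cast hne.to_set)
      have hdeg' : ((Finset.univ.filter (fun u => G.Adj v u)) ∩ s).card ≤ k := by
        have hset : G.neighborSet v ∩ ↑s =
            ↑((Finset.univ.filter (fun u => G.Adj v u)) ∩ s) := by
          ext u; simp [SimpleGraph.mem_neighborSet]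
        rw [hset, Set.ncard_coe_finset] at hdeg
        exact hdeg
      have hvs' : v ∈ s := hvs
      have hlt : (s.erase v).card < m := by
        rw [Finset.card_erase_of_mem hvs', hcard]
        have : 0 < m := hcard ▸ Finset.card_pos.mpr hne
        omega
      obtain ⟨l', hnd, htf, hbd⟩ := ih _ hlt (s.erase v) rfl
      refine ⟨l' ++ [v], ?_, ?_, ?_⟩
      · rw [List.nodup_append]
        refine ⟨hnd, List.nodup_singleton v, ?_⟩
        intro a ha b hav
        rw [List.mem_singleton] at hav
        have : a ∈ s.erase v := htf ▸ List.mem_toFinset.mpr ha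
        rw [hav]; exact (Finset.ne_of_mem_erase this)
      · rw [List.toFinset_append, htf]
        simp only [List.toFinset_cons, List.toFinset_nil, insert_empty_eq]
        rw [Finset.union_comm]
        ext x
        simp only [Finset.mem_union, Finset.mem_erase, Finset.mem_singleton]
        constructor
        · rintro (rfl | ⟨_, hx⟩) <;> [exact hvs'; exact hx]
        · intro hx
          by_cases hxv : x = v
          · exact Or.inl hxv
          · exact Or.inr ⟨hxv, hx⟩
      · intro i hi
        rw [List.length_append, List.length_singleton] at hi
        rcases lt_or_eq_of_le (Nat.lt_succ_iff.mp hi) with hlt' | heq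
        · have hget : (l' ++ [v]).get ⟨i, by simpa using hi⟩ = l'.get ⟨i, hlt'⟩ := by
            simp [List.getElem_append_left hlt']
          have htake : (l' ++ [v]).take i = l'.take i := by
            rw [List.take_append]
            simp [Nat.sub_eq_zero_of_le (le_of_lt hlt')]
          rw [hget, htake]
          exact hbd i hlt'
        · subst heq
          have hget : (l' ++ [v]).get ⟨l'.length, by simpa using hi⟩ = v := by
            simp
          have htake : (l' ++ [v]).take l'.length = l' := by
            rw [List.take_append]
            simp
          rw [hget, htake, htf]
          calc ((Finset.univ.filter (fun u => G.Adj v u)) ∩ s.erase v).card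
              ≤ ((Finset.univ.filter (fun u => G.Adj v u)) ∩ s).card := by
                apply Finset.card_le_card
                exact Finset.inter_subset_inter_left (Finset.erase_subset v s)
            _ ≤ k := hdeg'

theorem aux_dir2 (n k : ℕ) (G : SimpleGraph (Fin n)) (h : DegenLe G k) :
    BijOrPtrLe G k := by
  classical
  obtain ⟨l, hnd, htf, hbd⟩ := exists_elim_list G h (Finset.univ.card) Finset.univ rfl
  have hlen : l.length = n := by
    have := List.toFinset_card_of_nodup hnd
    rw [htf] at this
    simpa using this.symm
  -- g : position ↦ vertex
  set g : Fin n → Fin n := fun i => l.get (Fin.cast hlen.symm i) with hg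
  have hginj : Function.Injective g := by
    intro a b hab
    have := (List.nodup_iff_injective_get.mp hnd) hab
    simpa [Fin.ext_iff] using this
  have hgbij : Function.Bijective g := (Finite.injective_iff_bijective).mp hginj
  set e : Fin n ≃ Fin n := Equiv.ofBijective g hgbij with he
  set ι : Fin n ≃ Fin n := e.symm with hι
  have hgι : ∀ v, g (ι v) = v := fun v => e.apply_symm_apply v
  -- earlier neighbors
  set E : Fin n → Finset (Fin n) := fun v =>
    (Finset.univ.filter (fun u => G.Adj v u)) ∩ (l.take (ι v)).toFinset with hE
  have hEcard : ∀ v, (E v).card ≤ k := by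
    intro v
    have hlt : ((ι v : ℕ)) < l.length := by rw [hlen]; exact (ι v).isLt
    have := hbd (ι v) hlt
    have hgv : l.get ⟨(ι v : ℕ), hlt⟩ = v := hgι v
    rw [hgv] at this
    exact this
  have hEmem : ∀ v u, u ∈ E v ↔ G.Adj v u ∧ (ι u : ℕ) < (ι v : ℕ) := by
    intro v u
    rw [hE, Finset.mem_inter, Finset.mem_filter, List.mem_toFinset]
    constructor
    · rintro ⟨⟨-, hadj⟩, hmem⟩
      refine ⟨hadj, ?_⟩
      obtain ⟨j, hj, hjval⟩ := List.getElem_of_mem hmem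
      rw [List.length_take] at hj
      have hjv : j < (ι v : ℕ) := lt_of_lt_of_le hj (min_le_left _ _)
      have hjl : j < l.length := lt_of_lt_of_le hj (min_le_right _ _)
      have hjn : j < n := hlen ▸ hjl
      have hval : l[j] = u := by rw [← hjval, List.getElem_take]
      have hgj : g ⟨j, hjn⟩ = u := by
        simpa [hg, Fin.cast, List.get_eq_getElem] using hval
      have : ι u = ⟨j, hjn⟩ := by
        rw [hι]
        have : e ⟨j, hjn⟩ = u := hgj
        rw [← this, Equiv.symm_apply_apply]
      rw [this]
      exact hjv
    · rintro ⟨hadj, hlt⟩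
      refine ⟨⟨Finset.mem_univ u, hadj⟩, ?_⟩
      have hun : ((ι u : ℕ)) < l.length := by rw [hlen]; exact (ι u).isLt
      have hval : l[(ι u : ℕ)] = u := by
        have := hgι u
        simpa [hg, Fin.cast, List.get_eq_getElem] using this
      have hmem : u ∈ l.take (ι v) := by
        have hlt2 : (ι u : ℕ) < (l.take (ι v)).length := by
          rw [List.length_take]
          exact lt_min hlt hun
        have : (l.take (ι v))[(ι u : ℕ)] = u := by
          rw [List.getElem_take]; exact hval
        rw [← this]
        exact List.getElem_mem hlt2
      exact hmem
  -- the pointer labeling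
  set ℓ : Fin n → Fin k → Fin n := fun v i =>
    if h : (i : ℕ) < (E v).toList.length then ι ((E v).toList.get ⟨i, h⟩) else ι v with hℓ
  refine ⟨ι, ℓ, ?_⟩
  intro u v huv
  have key : ∀ u v : Fin n, u ≠ v → ((∃ i, ℓ v i = ι u) ↔ u ∈ E v) := by
    intro u v huv
    constructor
    · rintro ⟨i, hi⟩
      rw [hℓ] at hi
      simp only at hi
      split_ifs at hi with hcase
      · have : (E v).toList.get ⟨(i : ℕ), hcase⟩ = u := ι.injective hi
        rw [← this]
        rw [← Finset.mem_toList]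
        exact List.get_mem _ _
      · exact absurd (ι.injective hi).symm huv
    · intro hu
      rw [← Finset.mem_toList] at hu
      obtain ⟨j, hj, hjval⟩ := List.getElem_of_mem hu
      have hjk : j < k := lt_of_lt_of_le (by rwa [Finset.length_toList] at hj) (hEcard v)
      refine ⟨⟨j, hjk⟩, ?_⟩
      rw [hℓ]
      simp only
      rw [dif_pos (by simpa using hj)]
      rw [List.get_eq_getElem]
      simp only [hjval]
  rw [key u v huv, key v u (Ne.symm huv), hEmem, hEmem]
  constructor
  · intro hadj
    rcases lt_or_gt_of_ne (fun hh : ι u = ι v => huv (ι.injective hh)) with hlt | hgt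
    · exact Or.inl ⟨hadj.symm, Fin.lt_iff_val_lt_val.mp hlt⟩
    · exact Or.inr ⟨hadj, Fin.lt_iff_val_lt_val.mp hgt⟩
  · rintro (⟨hadj, -⟩ | ⟨hadj, -⟩)
    · exact hadj.symm
    · exact hadj

/-- Bijective or-pointer number and degeneracy are equivalent graph parameters:
bijective or-pointer number `≤ k` implies degeneracy `≤ 2k`, degeneracy `≤ k`
implies bijective or-pointer number `≤ k`, and hence a graph class has bounded
bijective or-pointer number iff it has bounded degeneracy. -/
theorem stmt_5 :
    (∀ (n k : ℕ) (G : SimpleGraph (Fin n)), BijOrPtrLe G k → DegenLe G (2 * k)) ∧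
    (∀ (n k : ℕ) (G : SimpleGraph (Fin n)), DegenLe G k → BijOrPtrLe G k) ∧
    (∀ C : GClass,
      (∃ k, ∀ n, ∀ G ∈ C n, BijOrPtrLe G k) ↔
      (∃ k, ∀ n, ∀ G ∈ C n, DegenLe G k)) := by
  refine ⟨aux_dir1, aux_dir2, ?_⟩
  intro C
  constructor
  · rintro ⟨k, hk⟩
    exact ⟨2 * k, fun n G hG => aux_dir1 n k G (hk n G hG)⟩
  · rintro ⟨k, hk⟩
    exact ⟨k, fun n G hG => aux_dir2 n k G (hk n G hG)⟩
end

section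
/- The bijective and-pointer number of an undirected graph equals its maximum degree. -/
/-- The bijective and-pointer number of `G` is at most `k`: there are a bijective
id-labeling `ι : V → [n]` and `ℓ : V → [n]^k` such that distinct `u, v` are
adjacent iff `ι u` occurs in `ℓ v` and `ι v` occurs in `ℓ u`. -/
def BijAndPtrLe {n : ℕ} (G : SimpleGraph (Fin n)) (k : ℕ) : Prop :=
  ∃ (ι : Fin n ≃ Fin n) (ℓ : Fin n → Fin k → Fin n),
    ∀ u v : Fin n, u ≠ v →
      (G.Adj u v ↔ (∃ i, ℓ v i = ι u) ∧ (∃ i, ℓ u i = ι v))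

/-!
With the identity labelling, let the pointers of `v` list its neighbours, padded with `v` itself
(which never counts, as only distinct pairs are tested): this uses `maxDegree` pointers.
Conversely, the pointers of `u` must contain the labels of all its neighbours, which are pairwise
distinct since the labelling is a bijection, so every degree is at most the number of pointers.
-/

lemma Finset.exists_fin_tuple_mem_iff {α : Type*} (s : Finset α) (a : α) {k : ℕ}
    (hk : s.card ≤ k) : ∃ f : Fin k → α, ∀ x, x ≠ a → ((∃ i, f i = x) ↔ x ∈ s) := by
  refine ⟨fun i => s.toList.getD i a, fun x hx => ⟨?_, fun hxs => ?_⟩⟩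
  · rintro ⟨i, rfl⟩
    dsimp only at hx ⊢
    by_cases hi : (i : ℕ) < s.toList.length
    · rw [List.getD_eq_getElem _ _ hi, ← Finset.mem_toList]
      exact List.getElem_mem hi
    · rw [List.getD_eq_default _ _ (not_lt.mp hi)] at hx
      exact absurd rfl hx
  · obtain ⟨j, hj, rfl⟩ := List.mem_iff_getElem.mp (Finset.mem_toList.mpr hxs)
    have hjk : j < k := hj.trans_le (by rwa [Finset.length_toList])
    exact ⟨⟨j, hjk⟩, List.getD_eq_getElem _ _ hj⟩

namespace SimpleGraph

variable {n : ℕ} (G : SimpleGraph (Fin n)) [DecidableRel G.Adj]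

lemma bijAndPtrLe_maxDegree : BijAndPtrLe G G.maxDegree := by
  have hℓ (v : Fin n) := (G.neighborFinset v).exists_fin_tuple_mem_iff v (G.degree_le_maxDegree v)
  choose ℓ hℓ using hℓ
  refine ⟨Equiv.refl _, ℓ, fun u v huv => ?_⟩
  simp only [Equiv.refl_apply, hℓ v u huv, hℓ u v huv.symm, mem_neighborFinset]
  exact ⟨fun h => ⟨h.symm, h⟩, And.right⟩

lemma degree_le_of_bijAndPtrLe {k : ℕ} (h : BijAndPtrLe G k) (u : Fin n) : G.degree u ≤ k := by
  obtain ⟨ι, ℓ, hrep⟩ := h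
  have hsub : (G.neighborFinset u).map ι.toEmbedding ⊆ Finset.univ.image (ℓ u) := by
    intro x hx
    obtain ⟨v, hv, rfl⟩ := Finset.mem_map.mp hx
    rw [mem_neighborFinset] at hv
    obtain ⟨i, hi⟩ := ((hrep u v (G.ne_of_adj hv)).mp hv).2
    exact Finset.mem_image.mpr ⟨i, Finset.mem_univ i, hi⟩
  calc G.degree u = ((G.neighborFinset u).map ι.toEmbedding).card := by
        rw [Finset.card_map, card_neighborFinset_eq_degree]
    _ ≤ (Finset.univ.image (ℓ u)).card := Finset.card_le_card hsub
    _ ≤ k := Finset.card_image_le.trans (Finset.card_fin k).le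

lemma isLeast_bijAndPtrLe_maxDegree : IsLeast {k | BijAndPtrLe G k} G.maxDegree :=
  ⟨G.bijAndPtrLe_maxDegree, fun _ hk =>
    G.maxDegree_le_of_forall_degree_le _ (G.degree_le_of_bijAndPtrLe hk)⟩

end SimpleGraph

/-- The bijective and-pointer number of an undirected graph (the least `k` such
that `G` has a bijective and-pointer representation with `k` pointers) equals its
maximum degree. -/
theorem stmt_6 (n : ℕ) (G : SimpleGraph (Fin n)) [DecidableRel G.Adj] :
    sInf {k | BijAndPtrLe G k} = G.maxDegree :=
  G.isLeast_bijAndPtrLe_maxDegree.csInf_eq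
end

section
/- Planar graphs have unbounded and-pointer number. Specifically, for every l ∈ ℕ there exists a planar graph (namely the graph G_k for k = l²+1 consisting of two stars with centers x and y, leaves x₁,…,x_k and y₁,…,y_k respectively, together with a perfect matching x_i y_i) whose and-pointer number exceeds l. -/
/-- Vertex set of the graph `G_k`: `(false, none)` is the star center `x`,
`(true, none)` is the center `y`, `(false, some i)` is the leaf `xᵢ` and
`(true, some i)` is the leaf `yᵢ`. -/
abbrev PV (k : ℕ) := Bool × Option (Fin k)

/-- Half of the adjacency of `G_k`: centers are adjacent to the leaves on
their side, and `xᵢ` is adjacent to `yᵢ` (a perfect matching). -/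
def Grel {k : ℕ} (a b : PV k) : Prop :=
  (a.2 = none ∧ a.1 = b.1 ∧ b.2 ≠ none) ∨
  (a.1 = false ∧ b.1 = true ∧ a.2 ≠ none ∧ a.2 = b.2)

/-- The (planar) graph `G_k`: two stars with centers `x`, `y` and leaves
`x₁,…,x_k` resp. `y₁,…,y_k`, together with the perfect matching `xᵢyᵢ`. -/
def Gk (k : ℕ) : SimpleGraph (PV k) where
  Adj a b := Grel a b ∨ Grel b a
  symm := ⟨fun a b h => h.symm⟩
  loopless := by
    refine ⟨?_⟩
    rintro a (h | h) <;> obtain ⟨h1, -, h3⟩ | ⟨h1, h2, -, -⟩ := h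
    · exact h3 h1
    · rw [h1] at h2; exact Bool.noConfusion h2
    · exact h3 h1
    · rw [h1] at h2; exact Bool.noConfusion h2

/-- The (not necessarily bijective) and-pointer number of `G` is at most `l`. -/
def APLe {V : Type} [Fintype V] (G : SimpleGraph V) (l : ℕ) : Prop :=
  ∃ (ι : V → Fin (Fintype.card V)) (ℓ : V → Fin l → Fin (Fintype.card V)),
    ∀ u v : V, u ≠ v →
      (G.Adj u v ↔ (∃ i, ℓ v i = ι u) ∧ (∃ i, ℓ u i = ι v))

/-!
The centre `x` of the first star points to all `k` leaves `xᵢ`, but has only `l` pointers, and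
likewise for `y`; so for `k > l²` two indices `i ≠ i'` give `xᵢ, xᵢ'` the same identifier and
`yᵢ, yᵢ'` the same identifier. The pointers witnessing the matching edges `xᵢyᵢ` and `xᵢ'yᵢ'` then
also witness the non-edge `xᵢyᵢ'`.
-/

def IsAndPointer {V α : Type*} (G : SimpleGraph V) {l : ℕ} (ι : V → α) (ℓ : V → Fin l → α) :
    Prop :=
  ∀ u v : V, u ≠ v → (G.Adj u v ↔ (∃ i, ℓ v i = ι u) ∧ (∃ i, ℓ u i = ι v))

namespace IsAndPointer

variable {V α : Type*} {G : SimpleGraph V} {l : ℕ} {ι : V → α} {ℓ : V → Fin l → α}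

theorem exists_pointer_of_adj (h : IsAndPointer G ι ℓ) {u v : V} (huv : G.Adj u v) :
    ∃ j, ℓ u j = ι v :=
  ((h u v huv.ne).mp huv).2

theorem adj_of_ident_eq (h : IsAndPointer G ι ℓ) {u v u' v' : V} (huv : G.Adj u v)
    (huv' : G.Adj u' v') (hu : ι u = ι u') (hv : ι v = ι v') (hne : u ≠ v') : G.Adj u v' := by
  obtain ⟨a, ha⟩ := h.exists_pointer_of_adj huv'.symm
  obtain ⟨b, hb⟩ := h.exists_pointer_of_adj huv
  exact (h u v' hne).mpr ⟨⟨a, ha.trans hu.symm⟩, ⟨b, hb.trans hv⟩⟩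

theorem exists_ne_ident_eq (h : IsAndPointer G ι ℓ) {k : ℕ} {c d : V} {f g : Fin k → V}
    (hf : ∀ i, G.Adj c (f i)) (hg : ∀ i, G.Adj d (g i)) (hk : l ^ 2 < k) :
    ∃ i i', i ≠ i' ∧ ι (f i) = ι (f i') ∧ ι (g i) = ι (g i') := by
  choose a ha using fun i => h.exists_pointer_of_adj (hf i)
  choose b hb using fun i => h.exists_pointer_of_adj (hg i)
  have hcard : Fintype.card (Fin l × Fin l) < Fintype.card (Fin k) := by simpa [sq] using hk
  obtain ⟨i, i', hne, hab⟩ :=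
    Fintype.exists_ne_map_eq_of_card_lt (fun i => (a i, b i)) hcard
  obtain ⟨hai, hbi⟩ := Prod.mk.inj hab
  exact ⟨i, i', hne, by rw [← ha, ← ha, hai], by rw [← hb, ← hb, hbi]⟩

end IsAndPointer

namespace Gk

variable {k : ℕ}

theorem adj_center (s : Bool) (i : Fin k) : (Gk k).Adj (s, none) (s, some i) :=
  Or.inl (Or.inl ⟨rfl, rfl, Option.some_ne_none i⟩)

theorem adj_matching (i : Fin k) : (Gk k).Adj (false, some i) (true, some i) :=
  Or.inl (Or.inr ⟨rfl, rfl, Option.some_ne_none i, rfl⟩)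

theorem not_adj_of_ne {i j : Fin k} (hij : i ≠ j) :
    ¬ (Gk k).Adj (false, some i) (true, some j) := by
  rintro ((⟨h, -⟩ | ⟨-, -, -, h⟩) | (⟨h, -⟩ | ⟨h, -⟩))
  · exact Option.some_ne_none i h
  · exact hij (Option.some_injective _ h)
  · exact Option.some_ne_none j h
  · exact Bool.noConfusion h

end Gk

/-- Planar graphs have unbounded and-pointer number: for every `l`, the planar
graph `G_k` with `k = l² + 1` has and-pointer number exceeding `l`. -/
theorem stmt_7 : ∀ l : ℕ, ¬ APLe (Gk (l ^ 2 + 1)) l := by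
  rintro l ⟨ι, ℓ, h : IsAndPointer _ ι ℓ⟩
  obtain ⟨i, i', hne, hx, hy⟩ :=
    h.exists_ne_ident_eq (Gk.adj_center false) (Gk.adj_center true) (Nat.lt_succ_self _)
  exact Gk.not_adj_of_ne hne
    (h.adj_of_ident_eq (Gk.adj_matching i) (Gk.adj_matching i') hx hy (by simp))
end

section
/- Every graph class with bounded twin index has bounded or-pointer number and bounded and-pointer number: a graph with at most k twin classes has or-pointer number at most k and and-pointer number at most k. -/
/-!
Adjacency between distinct vertices depends only on their twin classes. So every non-isolated
vertex can be identified with a fixed representative of its class, and a vertex `v` can list,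
for each class index `i`, the representative of class `i` whenever that class is adjacent to the
class of `v`. The remaining slots must point at nothing spurious: they repeat a neighbour of `v`,
or `v` itself when `v` is isolated; isolated vertices keep their own identifier, so no other vertex
can carry it. This one-sided representation is at once an or- and an and-representation.
-/

/-- Two vertices are twins if `N(u) \ {v} = N(v) \ {u}`. -/
def Twins {n : ℕ} (G : SimpleGraph (Fin n)) (u v : Fin n) : Prop :=
  G.neighborSet u \ {v} = G.neighborSet v \ {u}

/-- The twin index of `G` (number of classes of the twin equivalence relation)
is at most `k`. -/
def TwinIndexLe {n : ℕ} (G : SimpleGraph (Fin n)) (k : ℕ) : Prop :=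
  ∃ f : Fin n → Fin k, ∀ u v, f u = f v → Twins G u v

/-- The or-pointer number of `G` is at most `k`. -/
def OrPtrLe {n : ℕ} (G : SimpleGraph (Fin n)) (k : ℕ) : Prop :=
  ∃ (ι : Fin n → Fin n) (ℓ : Fin n → Fin k → Fin n),
    ∀ u v : Fin n, u ≠ v →
      (G.Adj u v ↔ (∃ i, ℓ v i = ι u) ∨ (∃ i, ℓ u i = ι v))

/-- The and-pointer number of `G` is at most `k`. -/
def AndPtrLe {n : ℕ} (G : SimpleGraph (Fin n)) (k : ℕ) : Prop :=
  ∃ (ι : Fin n → Fin n) (ℓ : Fin n → Fin k → Fin n),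
    ∀ u v : Fin n, u ≠ v →
      (G.Adj u v ↔ (∃ i, ℓ v i = ι u) ∧ (∃ i, ℓ u i = ι v))

open Function

def AdjFactorsThrough {V κ : Type*} (G : SimpleGraph V) (f : V → κ) : Prop :=
  ∀ ⦃u v a b : V⦄, f a = f u → f b = f v → G.Adj a b → u ≠ v → G.Adj u v

namespace AdjFactorsThrough

variable {V κ : Type*} {G : SimpleGraph V} {f : V → κ}

theorem exists_adj (hf : AdjFactorsThrough G f) {u v : V} (huv : f u = f v)
    (hu : ∃ w, G.Adj u w) : ∃ w, G.Adj v w := by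
  obtain ⟨w, huw⟩ := hu
  by_cases hvw : v = w
  · exact ⟨u, hvw ▸ huw.symm⟩
  · exact ⟨w, hf huv rfl huw hvw⟩

section Pointers

variable [Nonempty V]

variable (G f) in
open Classical in
noncomputable def pointerId (u : V) : V :=
  if ∃ w, G.Adj u w then invFun f (f u) else u

variable (G f) in
open Classical in
noncomputable def pointers (v : V) (i : κ) : V :=
  if ∃ a b, f a = i ∧ f b = f v ∧ G.Adj a b then invFun f i
  else if h : ∃ w, G.Adj v w then h.choose else v

theorem apply_pointerId (u : V) : f (pointerId G f u) = f u := by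
  unfold pointerId
  split_ifs
  exacts [invFun_eq ⟨u, rfl⟩, rfl]

theorem adj_iff_exists_pointers_eq (hf : AdjFactorsThrough G f) {u v : V} (huv : u ≠ v) :
    G.Adj u v ↔ ∃ i, pointers G f v i = pointerId G f u := by
  constructor
  · intro hadj
    refine ⟨f u, ?_⟩
    rw [pointers, if_pos ⟨u, v, rfl, rfl, hadj⟩, pointerId, if_pos ⟨v, hadj⟩]
  · rintro ⟨i, hi⟩
    have hfu := apply_pointerId (G := G) (f := f) u
    rw [← hi] at hfu
    unfold pointers at hi hfu
    split_ifs at hi hfu with hcls hv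
    · obtain ⟨a, b, ha, hb, hab⟩ := hcls
      rw [invFun_eq ⟨a, ha⟩] at hfu
      exact hf (ha.trans hfu) hb hab huv
    · exact hf hfu rfl hv.choose_spec.symm huv
    · unfold pointerId at hi
      split_ifs at hi with hu
      · exact absurd (hf.exists_adj hfu.symm hu) hv
      · exact absurd hi.symm huv

end Pointers

theorem exists_pointers (hf : AdjFactorsThrough G f) :
    ∃ (ι : V → V) (ℓ : V → κ → V), ∀ u v, u ≠ v → (G.Adj u v ↔ ∃ i, ℓ v i = ι u) := by
  cases isEmpty_or_nonempty V
  · exact ⟨id, fun v _ => v, fun u => isEmptyElim u⟩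
  · exact ⟨pointerId G f, pointers G f, fun _ _ => hf.adj_iff_exists_pointers_eq⟩

end AdjFactorsThrough

section TwinClasses

variable {n k : ℕ} {G : SimpleGraph (Fin n)}

theorem Twins.adj_of_adj {a b w : Fin n} (hab : Twins G a b) (hbw : G.Adj b w) (haw : a ≠ w) :
    G.Adj a w := by
  have hw : w ∈ G.neighborSet b \ {a} := ⟨hbw, fun h => haw (Set.mem_singleton_iff.mp h).symm⟩
  rw [← hab] at hw
  exact hw.1

theorem adjFactorsThrough_of_twins {f : Fin n → Fin k} (htw : ∀ u v, f u = f v → Twins G u v) :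
    AdjFactorsThrough G f := by
  intro u v a b ha hb hab huv
  by_cases hva : v = a
  · subst hva
    exact (htw u b (ha.symm.trans hb.symm)).adj_of_adj hab.symm huv
  · have hav : G.Adj a v := ((htw v b hb.symm).adj_of_adj hab.symm hva).symm
    exact (htw u a ha.symm).adj_of_adj hav huv

theorem orPtrLe_of_pointers {ι : Fin n → Fin n} {ℓ : Fin n → Fin k → Fin n}
    (h : ∀ u v, u ≠ v → (G.Adj u v ↔ ∃ i, ℓ v i = ι u)) : OrPtrLe G k :=
  ⟨ι, ℓ, fun u v huv =>
    ⟨fun hadj => .inl ((h u v huv).mp hadj),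
      fun hptr => hptr.elim (h u v huv).mpr fun hvu => ((h v u huv.symm).mpr hvu).symm⟩⟩

theorem andPtrLe_of_pointers {ι : Fin n → Fin n} {ℓ : Fin n → Fin k → Fin n}
    (h : ∀ u v, u ≠ v → (G.Adj u v ↔ ∃ i, ℓ v i = ι u)) : AndPtrLe G k :=
  ⟨ι, ℓ, fun u v huv =>
    ⟨fun hadj => ⟨(h u v huv).mp hadj, (h v u huv.symm).mp hadj.symm⟩,
      fun hptr => (h u v huv).mpr hptr.1⟩⟩

end TwinClasses

/-- A graph with at most `k` twin classes has or-pointer number at most `k`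
and and-pointer number at most `k`. -/
theorem stmt_8 (n k : ℕ) (G : SimpleGraph (Fin n)) (h : TwinIndexLe G k) :
    OrPtrLe G k ∧ AndPtrLe G k := by
  obtain ⟨f, htw⟩ := h
  obtain ⟨ι, ℓ, hptr⟩ := (adjFactorsThrough_of_twins htw).exists_pointers
  exact ⟨orPtrLe_of_pointers hptr, andPtrLe_of_pointers hptr⟩
end

section
/- For every k ∈ ℕ, the class of undirected graphs with twin index at most k is tiny and hereditary. In particular, for all sufficiently large n the number of unlabeled graphs on n vertices with twin index at most k is at most n^{n/3}. -/
/-- Graphs on `n` vertices with twin index at most `k`, up to isomorphism. -/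
def twinSetoid (n k : ℕ) : Setoid {G : SimpleGraph (Fin n) // TwinIndexLe G k} where
  r G H := Nonempty (G.1 ≃g H.1)
  iseqv := ⟨fun G => ⟨RelIso.refl _⟩, fun ⟨e⟩ => ⟨e.symm⟩, fun ⟨e⟩ ⟨f⟩ => ⟨e.trans f⟩⟩

/-- The number of unlabeled graphs on `n` vertices with twin index at most `k`. -/
noncomputable def unlabeledCount (n k : ℕ) : ℕ :=
  Nat.card (Quotient (twinSetoid n k))


lemma twins_adj {n : ℕ} {G : SimpleGraph (Fin n)} {a b w : Fin n}
    (h : Twins G a b) (ha : G.Adj a w) (hw : w ≠ b) : G.Adj b w := by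
  have hm : w ∈ G.neighborSet a \ {b} := ⟨ha, hw⟩
  rw [h] at hm
  exact hm.1

lemma key {n k : ℕ} {G : SimpleGraph (Fin n)} {f : Fin n → Fin k}
    (hf : ∀ u v, f u = f v → Twins G u v) {u v u' v' : Fin n}
    (h1 : u' ≠ v') (h2 : f u' = f u) (h3 : f v' = f v) (h4 : G.Adj u' v')
    (h5 : u ≠ v) : G.Adj u v := by
  have step1 : ∃ x, G.Adj u x ∧ x ≠ u ∧ f x = f v := by
    by_cases hu' : u = u'
    · exact ⟨v', hu' ▸ h4, fun h => h1 (hu' ▸ h.symm), h3⟩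
    · by_cases hv' : u = v'
      · exact ⟨u', (hv' ▸ h4).symm, fun h => h1 (h ▸ hv'), by rw [h2, hv', h3]⟩
      · have ht : Twins G u' u := hf u' u h2
        exact ⟨v', twins_adj ht h4 (fun h => hv' h.symm), fun h => hv' h.symm, h3⟩
  obtain ⟨x, hadj, hxu, hxv⟩ := step1
  by_cases hx : x = v
  · exact hx ▸ hadj
  · exact (twins_adj (hf x v hxv) hadj.symm h5).symm

lemma hered {m n k : ℕ} (e : Fin m ↪ Fin n) (G : SimpleGraph (Fin n))
    (h : TwinIndexLe G k) : TwinIndexLe (SimpleGraph.comap (⇑e) G) k := by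
  obtain ⟨f, hf⟩ := h
  refine ⟨f ∘ e, fun u v huv => ?_⟩
  have ht : Twins G (e u) (e v) := hf _ _ huv
  ext w
  simp only [Set.mem_diff, SimpleGraph.mem_neighborSet, SimpleGraph.comap_adj,
    Set.mem_singleton_iff]
  constructor
  · rintro ⟨ha, hw⟩
    have := twins_adj ht ha (fun hh => hw (e.injective hh))
    exact ⟨this, fun hh => G.loopless.irrefl _ (hh ▸ ha)⟩
  · rintro ⟨ha, hw⟩
    have := twins_adj (Eq.symm ht : Twins G (e v) (e u)) ha (fun hh => hw (e.injective hh))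
    exact ⟨this, fun hh => G.loopless.irrefl _ (hh ▸ ha)⟩

noncomputable def encode {n k : ℕ} (G : {G : SimpleGraph (Fin n) // TwinIndexLe G k}) :
    (Fin n → Fin k) × (Fin k → Fin k → Prop) :=
  ⟨G.2.choose, fun a b => ∃ u v, u ≠ v ∧ G.2.choose u = a ∧ G.2.choose v = b ∧ G.1.Adj u v⟩

lemma encode_inj {n k : ℕ} : Function.Injective (@encode n k) := by
  intro G H h
  have h1 : G.2.choose = H.2.choose := congrArg Prod.fst h
  have h2 := congrArg Prod.snd h
  apply Subtype.ext
  ext u v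
  have recon : ∀ (K : {G : SimpleGraph (Fin n) // TwinIndexLe G k}),
      K.1.Adj u v ↔ u ≠ v ∧ (encode K).2 (K.2.choose u) (K.2.choose v) := by
    intro K
    constructor
    · exact fun ha => ⟨ha.ne, u, v, ha.ne, rfl, rfl, ha⟩
    · rintro ⟨hne, u', v', h1', h2', h3', h4'⟩
      exact key K.2.choose_spec h1' h2' h3' h4' hne
  rw [recon G, recon H, h1, h2]

lemma count_le (n k : ℕ) :
    Nat.card {G : SimpleGraph (Fin n) // TwinIndexLe G k} ≤ k ^ n * 2 ^ (k * k) := by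
  have h1 := Nat.card_le_card_of_injective _ (@encode_inj n k)
  have h2 : Nat.card ((Fin n → Fin k) × (Fin k → Fin k → Prop)) = k ^ n * 2 ^ (k * k) := by
    rw [Nat.card_prod, Nat.card_fun, Nat.card_fun, Nat.card_fun]
    simp [Nat.card_eq_fintype_card, ← pow_mul]
  omega

lemma nat_bound {k n : ℕ} (h1 : 2 * k ^ 3 ≤ n) (h2 : 3 * k ^ 2 ≤ n) :
    (k ^ n * 2 ^ (k * k)) ^ 3 ≤ n ^ n := by
  calc (k ^ n * 2 ^ (k * k)) ^ 3 = (k ^ 3) ^ n * 2 ^ (3 * (k * k)) := by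
        rw [mul_pow, ← pow_mul, ← pow_mul, ← pow_mul]; ring_nf
    _ ≤ (k ^ 3) ^ n * 2 ^ n :=
        Nat.mul_le_mul_left _ (Nat.pow_le_pow_right (by norm_num) (by nlinarith))
    _ = (k ^ 3 * 2) ^ n := by rw [mul_pow]
    _ ≤ n ^ n := Nat.pow_le_pow_left (by omega) n

lemma main_bound (k : ℕ) {n : ℕ} (h1 : 2 * k ^ 3 ≤ n) (h2 : 3 * k ^ 2 ≤ n) (h3 : 1 ≤ n) :
    ((Nat.card (Quotient (twinSetoid n k)) : ℝ)) ≤ (n : ℝ) ^ ((n : ℝ) / 3) := by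
  set c := Nat.card (Quotient (twinSetoid n k)) with hc
  have hq : c ≤ k ^ n * 2 ^ (k * k) := by
    refine le_trans ?_ (count_le n k)
    exact Nat.card_le_card_of_surjective _ (Quotient.mk_surjective (s := twinSetoid n k))
  have hn3 : c ^ 3 ≤ n ^ n := le_trans (Nat.pow_le_pow_left hq 3) (nat_bound h1 h2)
  have hbpos : (0:ℝ) ≤ (n : ℝ) ^ ((n : ℝ) / 3) :=
    Real.rpow_nonneg (Nat.cast_nonneg n) _
  refine le_of_pow_le_pow_left₀ (n := 3) (by norm_num) hbpos ?_
  have hb3 : ((n : ℝ) ^ ((n : ℝ) / 3)) ^ (3:ℕ) = ((n ^ n : ℕ) : ℝ) := by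
    rw [← Real.rpow_natCast ((n : ℝ) ^ ((n : ℝ) / 3)) 3, ← Real.rpow_mul (Nat.cast_nonneg n)]
    push_cast
    rw [div_mul_cancel₀ _ (by norm_num : (3:ℝ) ≠ 0), Real.rpow_natCast]
  rw [hb3]
  calc ((c : ℝ)) ^ (3:ℕ) = ((c ^ 3 : ℕ) : ℝ) := by push_cast; ring
    _ ≤ ((n ^ n : ℕ) : ℝ) := Nat.cast_le.mpr hn3

/-- For every `k`, the class of graphs with twin index at most `k` is hereditary
and tiny; in particular, for all sufficiently large `n` the number of unlabeled
graphs on `n` vertices with twin index at most `k` is at most `n^{n/3}`. -/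
theorem stmt_9 (k : ℕ) :
    (∀ (m n : ℕ) (e : Fin m ↪ Fin n) (G : SimpleGraph (Fin n)),
      TwinIndexLe G k → TwinIndexLe (SimpleGraph.comap (⇑e) G) k) ∧
    (∃ c : ℝ, c < 1 / 2 ∧ ∃ N : ℕ, ∀ n ≥ N,
      (unlabeledCount n k : ℝ) ≤ (n : ℝ) ^ (c * n)) ∧
    (∃ N : ℕ, ∀ n ≥ N,
      (unlabeledCount n k : ℝ) ≤ (n : ℝ) ^ ((n : ℝ) / 3)) := by
  have hmain : ∀ n ≥ 2 * k ^ 3 + 3 * k ^ 2 + 1,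
      (unlabeledCount n k : ℝ) ≤ (n : ℝ) ^ ((n : ℝ) / 3) := by
    intro n hn
    exact main_bound k (by omega) (by omega) (by omega)
  refine ⟨fun m n e G h => hered e G h, ⟨1/3, by norm_num, 2 * k ^ 3 + 3 * k ^ 2 + 1,
    fun n hn => ?_⟩, ⟨2 * k ^ 3 + 3 * k ^ 2 + 1, hmain⟩⟩
  have : (1/3 : ℝ) * n = (n : ℝ) / 3 := by ring
  rw [this]
  exact hmain n hn
end

section
/- A directed graph G is dichotomic if and only if there exists a labeling ℓ : V(G) → ({0,…,n}})² (where n = |V(G)|) such that for all u, v ∈ V(G): (u,v) ∈ E(G) iff ℓ(u)₁ = ℓ(v)₂. -/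
/-!
If `u → v`, dichotomy forces every in-neighbour of `v` to have the same out-neighbourhood as `u`,
so `u → v` holds exactly when `N_out(u)` equals the intersection of the out-neighbourhoods of the
in-neighbours of `v`. These two set-valued labels take at most `n` values on the `u` side, so they
can be coded in `{0, …, n}`, reserving `n` for the values of the `v` side that never occur on the
`u` side. Conversely, labels `ℓ₁ u = ℓ₂ v` make `N_out(u)` and `N_out(u')` equal or disjoint
according as `ℓ₁ u = ℓ₁ u'`, and dually for in-neighbourhoods.
-/

/-- A directed graph is dichotomic if any two in-neighborhoods are disjoint or
equal, and likewise for out-neighborhoods. -/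
def Dichotomic {n : ℕ} (E : Fin n → Fin n → Prop) : Prop :=
  ∀ u v : Fin n,
    ({w | E u w} = {w | E v w} ∨ {w | E u w} ∩ {w | E v w} = (∅ : Set (Fin n))) ∧
    ({w | E w u} = {w | E w v} ∨ {w | E w u} ∩ {w | E w v} = (∅ : Set (Fin n)))

section Labels

variable {α β γ : Type*}

theorem setOf_eq_or_inter_eq_empty_of_iff_eq (R : α → γ → Prop) (f : α → β) (g : γ → β)
    (h : ∀ a c, R a c ↔ f a = g c) (a a' : α) :
    {c | R a c} = {c | R a' c} ∨ {c | R a c} ∩ {c | R a' c} = ∅ := by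
  by_cases hf : f a = f a'
  · left
    ext c
    simp only [Set.mem_ofPred_eq, h, hf]
  · right
    ext c
    simp only [Set.mem_inter_iff, Set.mem_ofPred_eq, h, Set.mem_empty_iff_false, iff_false]
    rintro ⟨hc, hc'⟩
    exact hf (hc.trans hc'.symm)

theorem rel_iff_setOf_eq_setOf_forall {E : α → α → Prop}
    (hE : ∀ u u' v, E u v → E u' v → {w | E u w} = {w | E u' w}) (u v : α) :
    E u v ↔ {w | E u w} = {w | ∀ u', E u' v → E u' w} := by
  constructor
  · intro huv
    ext w
    exact ⟨fun huw u' hu'v => (hE u u' v huv hu'v).subset huw, fun hw => hw u huv⟩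
  · intro hEq
    have hv : v ∈ {w | ∀ u', E u' v → E u' w} := fun _ h => h
    rwa [← hEq] at hv

end Labels

theorem Fin.exists_code_comp_eq_iff {n : ℕ} {β : Type*} (f : Fin n → β) :
    ∃ e : β → Fin (n + 1), ∀ u b, e (f u) = e b ↔ f u = b := by
  classical
  let e : β → Fin (n + 1) := fun b =>
    if h : ∃ u, f u = b then (Classical.choose h).castSucc else Fin.last n
  have he : ∀ u, e (f u) = (Classical.choose (⟨u, rfl⟩ : ∃ u', f u' = f u)).castSucc :=
    fun u => dif_pos _
  refine ⟨e, fun u b => ⟨fun hub => ?_, fun hub => hub ▸ rfl⟩⟩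
  by_cases hb : ∃ u', f u' = b
  · have hcode : e b = (Classical.choose hb).castSucc := dif_pos hb
    rw [he, hcode] at hub
    rw [← Classical.choose_spec hb, ← Fin.castSucc_injective _ hub]
    exact (Classical.choose_spec (⟨u, rfl⟩ : ∃ u', f u' = f u)).symm
  · have hcode : e b = Fin.last n := dif_neg hb
    rw [he, hcode] at hub
    exact absurd hub (Fin.castSucc_lt_last _).ne

theorem Dichotomic.outNeighbor_eq {n : ℕ} {E : Fin n → Fin n → Prop} (hD : Dichotomic E)
    (u u' v : Fin n) (hu : E u v) (hu' : E u' v) : {w | E u w} = {w | E u' w} :=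
  (hD u u').1.resolve_right fun hdisj => (hdisj ▸ ⟨hu, hu'⟩ : v ∈ (∅ : Set (Fin n)))

theorem dichotomic_of_iff_eq {n : ℕ} {β : Type*} {E : Fin n → Fin n → Prop} (f g : Fin n → β)
    (h : ∀ u v, E u v ↔ f u = g v) : Dichotomic E := fun u v =>
  ⟨setOf_eq_or_inter_eq_empty_of_iff_eq E f g h u v,
    setOf_eq_or_inter_eq_empty_of_iff_eq (fun v u => E u v) g f
      (fun v u => (h u v).trans eq_comm) u v⟩

/-- A directed graph `G` on `n` vertices is dichotomic iff there is a labeling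
`ℓ : V(G) → {0,…,n}²` with `(u,v) ∈ E(G)` iff `ℓ(u)₁ = ℓ(v)₂`. -/
theorem stmt_10 (n : ℕ) (E : Fin n → Fin n → Prop) :
    Dichotomic E ↔
      ∃ ℓ : Fin n → Fin (n + 1) × Fin (n + 1),
        ∀ u v : Fin n, E u v ↔ (ℓ u).1 = (ℓ v).2 := by
  constructor
  · intro hD
    obtain ⟨e, he⟩ := Fin.exists_code_comp_eq_iff fun u => {w | E u w}
    refine ⟨fun u => (e {w | E u w}, e {w | ∀ u', E u' u → E u' w}), fun u v => ?_⟩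
    rw [rel_iff_setOf_eq_setOf_forall hD.outNeighbor_eq]
    exact (he _ _).symm
  · rintro ⟨ℓ, hℓ⟩
    exact dichotomic_of_iff_eq (fun u => (ℓ u).1) (fun v => (ℓ v).2) hℓ
end

section
/- A directed graph G on n vertices is a linear neighborhood graph if and only if there exists a labeling ℓ : V(G) → ({0,…,n})² such that for all u, v ∈ V(G): (u,v) ∈ E(G) iff ℓ(u)₁ < ℓ(v)₂. -/
/-!
Order the vertices by inclusion of their out-neighbourhoods. When these form a chain, `u → v`
holds exactly when every vertex whose out-neighbourhood contains `N⁺(u)` is an in-neighbour of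
`v`; the two vertex sets involved are always comparable, so the inclusion is decided by their
cardinalities, which serve as the labels. Conversely, under a labeling every out- (in-)
neighbourhood is a threshold set `{w | c < ℓ(w)₂}` (`{w | ℓ(w)₁ < c}`), and threshold sets are
nested.
-/

/-- A directed graph is a linear neighborhood graph if any two in-neighborhoods
are comparable under inclusion, and likewise for out-neighborhoods. -/
def LinearNbhd {n : ℕ} (E : Fin n → Fin n → Prop) : Prop :=
  ∀ u v : Fin n,
    ({w | E u w} ⊆ {w | E v w} ∨ {w | E v w} ⊆ {w | E u w}) ∧
    ({w | E w u} ⊆ {w | E w v} ∨ {w | E w v} ⊆ {w | E w u})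

theorem Set.subset_iff_ncard_le_of_subset_or_subset {α : Type*} [Finite α] {s t : Set α}
    (hst : s ⊆ t ∨ t ⊆ s) : s ⊆ t ↔ s.ncard ≤ t.ncard := by
  refine ⟨fun h => Set.ncard_le_ncard h, fun hcard => ?_⟩
  rcases hst with hst | hts
  · exact hst
  · exact (Set.eq_of_subset_of_ncard_le hts hcard).ge

section Threshold

variable {V α : Type*} [LinearOrder α] {E : V → V → Prop} {f g : V → α}

theorem outNbhd_total_of_adj_iff_lt (hE : ∀ u v, E u v ↔ f u < g v) (u v : V) :
    {w | E u w} ⊆ {w | E v w} ∨ {w | E v w} ⊆ {w | E u w} := by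
  simp only [hE]
  rcases le_total (f u) (f v) with h | h
  · exact Or.inr fun w hw => h.trans_lt hw
  · exact Or.inl fun w hw => h.trans_lt hw

theorem inNbhd_total_of_adj_iff_lt (hE : ∀ u v, E u v ↔ f u < g v) (u v : V) :
    {w | E w u} ⊆ {w | E w v} ∨ {w | E w v} ⊆ {w | E w u} := by
  simp only [hE]
  rcases le_total (g u) (g v) with h | h
  · exact Or.inl fun w hw => hw.trans_le h
  · exact Or.inr fun w hw => hw.trans_le h

end Threshold

section Ranking

variable {V : Type*} (E : V → V → Prop)

def outNbhdSupersets (u : V) : Set V := {w | {x | E u x} ⊆ {x | E w x}}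

variable {E}

theorem self_mem_outNbhdSupersets (u : V) : u ∈ outNbhdSupersets E u :=
  Set.Subset.rfl

theorem adj_iff_outNbhdSupersets_subset (u v : V) :
    E u v ↔ outNbhdSupersets E u ⊆ {w | E w v} :=
  ⟨fun huv _ hw => hw huv, fun h => h (self_mem_outNbhdSupersets u)⟩

theorem inNbhd_subset_outNbhdSupersets
    (hE : ∀ u v, {w | E u w} ⊆ {w | E v w} ∨ {w | E v w} ⊆ {w | E u w}) {u v : V}
    (huv : ¬E u v) : {w | E w v} ⊆ outNbhdSupersets E u := fun w hwv =>
  (hE u w).resolve_right fun hwu => huv (hwu hwv)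

theorem adj_iff_ncard_le [Finite V]
    (hE : ∀ u v, {w | E u w} ⊆ {w | E v w} ∨ {w | E v w} ⊆ {w | E u w}) (u v : V) :
    E u v ↔ (outNbhdSupersets E u).ncard ≤ {w | E w v}.ncard := by
  rw [adj_iff_outNbhdSupersets_subset (E := E)]
  refine Set.subset_iff_ncard_le_of_subset_or_subset ?_
  by_cases huv : E u v
  · exact Or.inl ((adj_iff_outNbhdSupersets_subset u v).1 huv)
  · exact Or.inr (inNbhd_subset_outNbhdSupersets hE huv)

theorem exists_labeling_of_outNbhd_total [Finite V]
    (hE : ∀ u v, {w | E u w} ⊆ {w | E v w} ∨ {w | E v w} ⊆ {w | E u w}) :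
    ∃ ℓ : V → Fin (Nat.card V + 1) × Fin (Nat.card V + 1),
      ∀ u v, E u v ↔ (ℓ u).1 < (ℓ v).2 := by
  -- The `- 1` turns the `≤` of `adj_iff_ncard_le` into `<`; no truncation, as `u` is counted.
  refine ⟨fun u => (⟨(outNbhdSupersets E u).ncard - 1, ?_⟩, ⟨{w | E w u}.ncard, ?_⟩), ?_⟩
  · have := Set.ncard_le_card (outNbhdSupersets E u)
    omega
  · exact Nat.lt_succ_of_le (Set.ncard_le_card _)
  · intro u v
    have hpos : 0 < (outNbhdSupersets E u).ncard :=
      (Set.ncard_pos (Set.toFinite _)).2 ⟨u, self_mem_outNbhdSupersets u⟩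
    rw [adj_iff_ncard_le hE, Fin.mk_lt_mk]
    omega

end Ranking

/-- A directed graph `G` on `n` vertices is a linear neighborhood graph iff
there is a labeling `ℓ : V(G) → {0,…,n}²` with `(u,v) ∈ E(G)` iff
`ℓ(u)₁ < ℓ(v)₂`. -/
theorem stmt_12 (n : ℕ) (E : Fin n → Fin n → Prop) :
    LinearNbhd E ↔
      ∃ ℓ : Fin n → Fin (n + 1) × Fin (n + 1),
        ∀ u v : Fin n, E u v ↔ (ℓ u).1 < (ℓ v).2 := by
  constructor
  · intro h
    have := exists_labeling_of_outNbhd_total fun u v => (h u v).1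
    rwa [Nat.card_fin] at this
  · rintro ⟨ℓ, hℓ⟩ u v
    exact ⟨outNbhd_total_of_adj_iff_lt hℓ u v, inNbhd_total_of_adj_iff_lt hℓ u v⟩
end

section
/- Let D be a hereditary and inflatable graph class. Then for every graph class C: C ≤_sg D if and only if there exist k ∈ ℕ and a k²-ary boolean function f such that every graph in C has an (H,f)-representation for some H ∈ D (with no restriction on the number of vertices of H). -/
/-- Directed graphs with possible self-loops on vertex set `Fin n`,
with Bool-valued adjacency. -/
abbrev BGraph (n : ℕ) := Fin n → Fin n → Bool

/-- A graph class: for each number of vertices, a set of graphs. -/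
abbrev GraphClass := ∀ n : ℕ, Set (BGraph n)

/-- A `k²`-ary boolean function, taking a `k × k` boolean matrix. -/
abbrev MatFun (k : ℕ) := (Fin k → Fin k → Bool) → Bool

/-- `G` has an `(H,f)`-representation: there is `ℓ : V(G) → V(H)^k` such that
distinct `u, v` are adjacent in `G` iff `f` applied to the `k × k` matrix of
adjacency indicators `(ℓ(u)ᵢ, ℓ(v)ⱼ) ∈ E(H)` is `true`. -/
def HFRep {n m k : ℕ} (G : BGraph n) (H : BGraph m) (f : MatFun k) : Prop :=
  ∃ ℓ : Fin n → Fin k → Fin m,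
    ∀ u v : Fin n, u ≠ v → G u v = f fun i j => H (ℓ u i) (ℓ v j)

/-- `C ≤_sg D` via constants `c, k` and boolean function `f`: every `n`-vertex
graph of `C` has an `(H,f)`-representation for some `H ∈ D` on `n^c` vertices. -/
def SGvia (C D : GraphClass) (c k : ℕ) (f : MatFun k) : Prop :=
  ∀ n : ℕ, ∀ G ∈ C n, ∃ H ∈ D (n ^ c), HFRep G H f

/-- The subgraph reduction `C ≤_sg D`. -/
def ReducesSG (C D : GraphClass) : Prop :=
  ∃ (c k : ℕ) (f : MatFun k), SGvia C D c k f

/-- A graph class is hereditary if it is closed under induced subgraphs. -/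
def Hered (D : GraphClass) : Prop :=
  ∀ (m n : ℕ) (e : Fin m ↪ Fin n), ∀ G ∈ D n,
    (fun u v => G (e u) (e v)) ∈ D m

/-- A graph class is inflatable if every `n`-vertex member embeds as an induced
subgraph into an `m`-vertex member, for every `m > n`. -/
def Inflatable (D : GraphClass) : Prop :=
  ∀ n : ℕ, ∀ G ∈ D n, ∀ m > n, ∃ H ∈ D m, ∃ e : Fin n ↪ Fin m,
    ∀ u v, G u v = H (e u) (e v)

/-!
Only the direction from unrestricted to `n ^ c`-vertex representations needs work. A
representation of an `n`-vertex graph with `k`-tuples uses at most `n * k ≤ n ^ (k + 1)`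
vertices of `H` (for `n ≥ 2`), so `H` can be shrunk to exactly `n ^ (k + 1)` vertices by
heredity when it is too large, and inflated to that size when it is too small. Graphs on at
most one vertex have no adjacencies to represent.
-/

section HFRep

variable {n m m' k : ℕ} {G : BGraph n} {H : BGraph m} {f : MatFun k}

theorem HFRep.of_induced_embedding {H' : BGraph m'} (φ : Fin m → Fin m')
    (hφ : ∀ a b, H a b = H' (φ a) (φ b)) (h : HFRep G H f) : HFRep G H' f := by
  obtain ⟨ℓ, hℓ⟩ := h
  exact ⟨fun u i => φ (ℓ u i), fun u v huv => by simp only [hℓ u v huv, hφ]⟩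

theorem hfRep_induce_of_forall_mem_range (ℓ : Fin n → Fin k → Fin m)
    (hℓ : ∀ u v, u ≠ v → G u v = f fun i j => H (ℓ u i) (ℓ v j))
    (e : Fin m' → Fin m) (hrange : ∀ u i, ℓ u i ∈ Set.range e) :
    HFRep G (fun a b => H (e a) (e b)) f := by
  choose ℓ' hℓ' using hrange
  exact ⟨ℓ', fun u v huv => by simp only [hℓ', hℓ u v huv]⟩

theorem hfRep_of_le_one (hn : n ≤ 1) (hnm : n ≤ m) (G : BGraph n) (H : BGraph m)
    (f : MatFun k) : HFRep G H f :=
  ⟨fun u _ => Fin.castLE hnm u, fun u v huv =>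
    absurd (Fin.ext (by have := u.isLt; have := v.isLt; omega)) huv⟩

end HFRep

theorem Finset.exists_embedding_fin_subset_range {m N : ℕ} {S : Finset (Fin m)}
    (hS : S.card ≤ N) (hN : N ≤ m) : ∃ e : Fin N ↪ Fin m, ∀ a ∈ S, a ∈ Set.range e := by
  obtain ⟨T, hST, hT⟩ := Finset.exists_superset_card_eq hS (by simpa using hN)
  refine ⟨(T.orderEmbOfFin hT).toEmbedding, fun a ha => ?_⟩
  simpa [Finset.range_orderEmbOfFin] using hST ha

section Resize

variable {D : GraphClass} {m : ℕ} {H : BGraph m}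

theorem Inflatable.exists_mem (hher : Hered D) (hinf : Inflatable D) (hH : H ∈ D m)
    (N : ℕ) : ∃ H' : BGraph N, H' ∈ D N := by
  rcases lt_or_ge m N with hmN | hNm
  · obtain ⟨H', hH', -⟩ := hinf m H hH N hmN
    exact ⟨H', hH'⟩
  · exact ⟨_, hher N m (Fin.castLEEmb hNm) H hH⟩

theorem Inflatable.exists_mem_hfRep_of_mul_le (hher : Hered D) (hinf : Inflatable D)
    {n k N : ℕ} {G : BGraph n} {f : MatFun k} (hH : H ∈ D m) (hrep : HFRep G H f)
    (hN : n * k ≤ N) : ∃ H' ∈ D N, HFRep G H' f := by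
  rcases lt_or_ge m N with hmN | hNm
  · obtain ⟨H', hH', e, he⟩ := hinf m H hH N hmN
    exact ⟨H', hH', hrep.of_induced_embedding e he⟩
  · obtain ⟨ℓ, hℓ⟩ := hrep
    let S := Finset.univ.image fun p : Fin n × Fin k => ℓ p.1 p.2
    have hS : S.card ≤ N := calc
      S.card ≤ (Finset.univ : Finset (Fin n × Fin k)).card := Finset.card_image_le
      _ = n * k := by simp
      _ ≤ N := hN
    obtain ⟨e, he⟩ := Finset.exists_embedding_fin_subset_range hS hNm
    refine ⟨_, hher N m e H hH, hfRep_induce_of_forall_mem_range ℓ hℓ e fun u i => ?_⟩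
    exact he _ (Finset.mem_image_of_mem _ (Finset.mem_univ (u, i)))

end Resize

theorem Nat.mul_le_pow_succ {n : ℕ} (hn : 2 ≤ n) (k : ℕ) : n * k ≤ n ^ (k + 1) := calc
  n * k ≤ n * n ^ k :=
    Nat.mul_le_mul_left n (Nat.lt_two_pow_self.le.trans (Nat.pow_le_pow_left hn k))
  _ = n ^ (k + 1) := by rw [pow_succ, mul_comm]

/-- For a hereditary and inflatable graph class `D`: `C ≤_sg D` iff there are
`k` and a `k²`-ary boolean function `f` such that every graph in `C` has an
`(H,f)`-representation for some `H ∈ D` (of arbitrary size). -/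
theorem stmt_17 (D : GraphClass) (hher : Hered D) (hinf : Inflatable D)
    (C : GraphClass) :
    ReducesSG C D ↔
      ∃ (k : ℕ) (f : MatFun k), ∀ n : ℕ, ∀ G ∈ C n,
        ∃ (m : ℕ), ∃ H ∈ D m, HFRep G H f := by
  constructor
  · rintro ⟨c, k, f, h⟩
    refine ⟨k, f, fun n G hG => ?_⟩
    obtain ⟨H, hH, hrep⟩ := h n G hG
    exact ⟨n ^ c, H, hH, hrep⟩
  · rintro ⟨k, f, h⟩
    refine ⟨k + 1, k, f, fun n G hG => ?_⟩
    obtain ⟨m, H, hH, hrep⟩ := h n G hG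
    rcases le_or_gt n 1 with hn | hn
    · obtain ⟨H', hH'⟩ := hinf.exists_mem hher hH (n ^ (k + 1))
      exact ⟨H', hH', hfRep_of_le_one hn (Nat.le_self_pow (Nat.succ_ne_zero k) n) G H' f⟩
    · exact hinf.exists_mem_hfRep_of_mul_le hher hH hrep (Nat.mul_le_pow_succ hn k)
end
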